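/- arXiv:math-ph/0504078 — 2 statements merged into one kernel-verified Lean document; each statement's English description precedes it below -/
import Mathlib

section
/- For the zero-energy scattering solution: if f(x) = 1 − a₀/|x| for |x| > R with 0 < a₀ < R, and f solves (−Δ + ½V)f = 0 with V ≥ 0, then 0 ≤ f(x) ≤ 1 for all x and f is radially nondecreasing; in particular the generalized scattering length a₀ = lim_{r→∞} r(1 − f(r)) exists and is nonnegative. -/
noncomputable section
open MeasureTheory Filter Real

abbrev E3 := EuclideanSpace ℝ (Fin 3)

/-- Laplacian of a scalar function on ℝ³. -/
def lap3 (f : E3 → ℝ) (x : E3) : ℝ :=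
  ∑ i : Fin 3, fderiv ℝ (fun y => fderiv ℝ f y (EuclideanSpace.single i 1)) x
    (EuclideanSpace.single i 1)

lemma second_dir_deriv_line (f : E3 → ℝ) (hf : ContDiff ℝ (⊤ : ℕ∞) f) (x₀ v : E3) :
    fderiv ℝ (fun y => fderiv ℝ f y v) x₀ v
      = deriv (deriv (fun t : ℝ => f (x₀ + t • v))) 0 := by
  have hφ : ∀ t : ℝ, HasDerivAt (fun t : ℝ => x₀ + t • v) v t := by
    intro t
    simpa using ((hasDerivAt_id t).smul_const v).const_add x₀
  have hd1 : ∀ t : ℝ, HasDerivAt (fun t : ℝ => f (x₀ + t • v))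
      (fderiv ℝ f (x₀ + t • v) v) t := by
    intro t
    exact ((hf.differentiable (by simp) (x₀ + t • v)).hasFDerivAt).comp_hasDerivAt t (hφ t)
  have h1 : deriv (fun t : ℝ => f (x₀ + t • v))
      = fun t => fderiv ℝ f (x₀ + t • v) v := funext fun t => (hd1 t).deriv
  have hfd : Differentiable ℝ (fderiv ℝ f) :=
    (hf.fderiv_right (m := (⊤ : ℕ∞)) (by simp)).differentiable (by simp)
  have hF : Differentiable ℝ (fun y => fderiv ℝ f y v) :=
    hfd.clm_apply (differentiable_const v)
  have hd2 : HasDerivAt (fun t : ℝ => fderiv ℝ f (x₀ + t • v) v)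
      (fderiv ℝ (fun y => fderiv ℝ f y v) (x₀ + (0:ℝ) • v) v) 0 :=
    by have h := ((hF (x₀ + (0:ℝ) • v)).hasFDerivAt).comp_hasDerivAt 0 (hφ 0); exact h
  rw [h1]
  have := hd2.deriv
  simp only [zero_smul, add_zero] at this ⊢
  exact this.symm

lemma shift_second_deriv (g : ℝ → ℝ) (hg : ContDiff ℝ (⊤ : ℕ∞) g) (r : ℝ) :
    deriv (deriv (fun t : ℝ => g (r + t))) 0 = deriv (deriv g) r := by
  have hg' : ContDiff ℝ (⊤ : ℕ∞) (deriv g) := (contDiff_infty_iff_deriv.mp hg).2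
  have h1 : deriv (fun t : ℝ => g (r + t)) = fun t => deriv g (r + t) := by
    funext t
    have h := ((hg.differentiable (by simp) (r + t)).hasDerivAt.comp t
      (by simpa using (hasDerivAt_id t).const_add r))
    simp only [Function.comp_def] at h
    rw [h.deriv]; ring
  rw [h1]
  have h := ((hg'.differentiable (by simp) (r + 0)).hasDerivAt.comp 0
      (by simpa using (hasDerivAt_id (0:ℝ)).const_add r))
  simp only [Function.comp_def] at h
  simpa using h.deriv

lemma transverse_second_deriv (g : ℝ → ℝ) (hg : ContDiff ℝ (⊤ : ℕ∞) g) (r : ℝ) (hr : 0 < r) :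
    deriv (deriv (fun t : ℝ => g (Real.sqrt (r ^ 2 + t ^ 2)))) 0 = deriv g r / r := by
  set p : ℝ → ℝ := fun t => Real.sqrt (r ^ 2 + t ^ 2) with hp
  have hqpos : ∀ t : ℝ, 0 < r ^ 2 + t ^ 2 := fun t => by positivity
  have hppos : ∀ t : ℝ, 0 < p t := fun t => Real.sqrt_pos.mpr (hqpos t)
  have hp0 : p 0 = r := by simp [hp, Real.sqrt_sq hr.le]
  have hpd : ∀ t : ℝ, HasDerivAt p (t / p t) t := by
    intro t
    have hq : HasDerivAt (fun t : ℝ => r ^ 2 + t ^ 2) (2 * t) t := by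
      simpa using ((hasDerivAt_pow 2 t).const_add (r ^ 2))
    have hs := (Real.hasDerivAt_sqrt (hqpos t).ne').comp t hq
    simp only [Function.comp_def] at hs
    refine hs.congr_deriv ?_
    rw [hp]
    field_simp
  have h1 : deriv (fun t : ℝ => g (p t)) = fun t => deriv g (p t) / p t * t := by
    funext t
    have h := ((hg.differentiable (by simp) (p t)).hasDerivAt.comp t (hpd t))
    simp only [Function.comp_def] at h
    rw [h.deriv]
    field_simp
  rw [h1]
  have hg' : ContDiff ℝ (⊤ : ℕ∞) (deriv g) := (contDiff_infty_iff_deriv.mp hg).2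
  have hq1 : DifferentiableAt ℝ (fun t => deriv g (p t) / p t) 0 := by
    exact ((hg'.differentiable (by simp) (p 0)).comp 0
      (hpd 0).differentiableAt).div (hpd 0).differentiableAt (hppos 0).ne'
  have h := (hq1.hasDerivAt.mul (hasDerivAt_id (0:ℝ))).deriv
  simpa [hp0, Pi.mul_def] using h

/-- For the zero-energy scattering solution `f` (with `f = 1 - a₀/|x|` outside the
support of `V ≥ 0`), one has `0 ≤ f ≤ 1`, `f` is radially nondecreasing, and the
generalized scattering length `lim_{r→∞} r(1-f(r))` exists, equals `a₀`, and is
nonnegative. -/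
theorem scattering_solution_monotone_bounded
    (V f : E3 → ℝ) (a₀ R : ℝ) (ha₀ : 0 < a₀) (haR : a₀ < R)
    (hV_nonneg : ∀ x, 0 ≤ V x)
    (hV_smooth : ContDiff ℝ (⊤ : ℕ∞) V)
    (hV_radial : ∀ x y : E3, ‖x‖ = ‖y‖ → V x = V y)
    (hV_supp : Function.support V ⊆ Metric.closedBall (0 : E3) R)
    (hf_smooth : ContDiff ℝ (⊤ : ℕ∞) f)
    (hf_radial : ∀ x y : E3, ‖x‖ = ‖y‖ → f x = f y)
    (hf_eq : ∀ x : E3, -lap3 f x + (1 / 2) * V x * f x = 0)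
    (hf_out : ∀ x : E3, R < ‖x‖ → f x = 1 - a₀ / ‖x‖) :
    (∀ x : E3, 0 ≤ f x ∧ f x ≤ 1) ∧
      (∀ x y : E3, ‖x‖ ≤ ‖y‖ → f x ≤ f y) ∧
      (∀ v : E3, ‖v‖ = 1 →
        Tendsto (fun r : ℝ => r * (1 - f (r • v))) atTop (nhds a₀)) ∧
      0 ≤ a₀ := by
  have hR : 0 < R := ha₀.trans haR
  set e0 : E3 := EuclideanSpace.single 0 1 with he0
  have he0n : ‖e0‖ = 1 := by simp [he0, EuclideanSpace.norm_single]
  set g : ℝ → ℝ := fun t => f (t • e0) with hgdef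
  have hsm : ContDiff ℝ (⊤ : ℕ∞) (fun t : ℝ => t • e0) :=
    contDiff_id.smul contDiff_const
  have hg : ContDiff ℝ (⊤ : ℕ∞) g := (hf_smooth.of_le (by simp)).comp hsm
  have hg' : ContDiff ℝ (⊤ : ℕ∞) (deriv g) := (contDiff_infty_iff_deriv.mp hg).2
  have hnorm_smul : ∀ r : ℝ, 0 ≤ r → ‖r • e0‖ = r := by
    intro r hr; simp [norm_smul, he0n, abs_of_nonneg hr]
  have hfx : ∀ x : E3, f x = g ‖x‖ := by
    intro x
    exact hf_radial x (‖x‖ • e0) (by rw [hnorm_smul _ (norm_nonneg x)])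
  -- the radial Laplacian formula
  have hlap : ∀ r : ℝ, 0 < r →
      lap3 f (r • e0) = deriv (deriv g) r + 2 * (deriv g r / r) := by
    intro r hr
    have horth : ∀ i : Fin 3, i ≠ 0 → ∀ t : ℝ,
        ‖r • e0 + t • EuclideanSpace.single i (1:ℝ)‖ = Real.sqrt (r ^ 2 + t ^ 2) := by
      intro i hi t
      have h1 : ‖r • e0 + t • EuclideanSpace.single i (1:ℝ)‖ ^ 2 = r ^ 2 + t ^ 2 := by
        rw [norm_add_sq_real]
        have hinner : inner ℝ (r • e0) (t • EuclideanSpace.single i (1:ℝ)) = (0:ℝ) := by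
          rw [he0, real_inner_smul_left, real_inner_smul_right,
            EuclideanSpace.inner_single_right]
          simp [EuclideanSpace.single_apply, hi]
        rw [hinner]
        simp [norm_smul, he0n, EuclideanSpace.norm_single]
      rw [← h1, Real.sqrt_sq (norm_nonneg _)]
    have hterm : ∀ i : Fin 3, i ≠ 0 →
        fderiv ℝ (fun y => fderiv ℝ f y (EuclideanSpace.single i 1)) (r • e0)
          (EuclideanSpace.single i 1) = deriv g r / r := by
      intro i hi
      rw [second_dir_deriv_line f hf_smooth]
      have : (fun t : ℝ => f (r • e0 + t • EuclideanSpace.single i (1:ℝ)))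
          = fun t : ℝ => g (Real.sqrt (r ^ 2 + t ^ 2)) := by
        funext t
        rw [hfx, horth i hi t]
      rw [this, transverse_second_deriv g hg r hr]
    have hterm0 :
        fderiv ℝ (fun y => fderiv ℝ f y (EuclideanSpace.single 0 1)) (r • e0)
          (EuclideanSpace.single 0 1) = deriv (deriv g) r := by
      rw [second_dir_deriv_line f hf_smooth]
      have : (fun t : ℝ => f (r • e0 + t • EuclideanSpace.single 0 (1:ℝ)))
          = fun t : ℝ => g (r + t) := by
        funext t
        rw [hgdef]
        simp only [he0]
        rw [← add_smul]
      rw [this, shift_second_deriv g hg r]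
    rw [lap3, Fin.sum_univ_three, hterm0, hterm 1 (by decide), hterm 2 (by decide)]
    ring
  -- the radial ODE for u r = r * g r
  set c : ℝ → ℝ := fun r => (1 / 2) * V (r • e0) with hcdef
  have hc : ∀ r : ℝ, 0 ≤ c r := fun r => by
    have := hV_nonneg (r • e0); simp only [hcdef]; linarith
  set u : ℝ → ℝ := fun r => r * g r with hudef
  have hu : ContDiff ℝ (⊤ : ℕ∞) u := contDiff_id.mul hg
  have hu1 : deriv u = fun r => g r + r * deriv g r := by
    funext r
    have h : HasDerivAt u (1 * g r + r * deriv g r) r := by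
      simpa [id_eq, Pi.mul_def] using ((hasDerivAt_id r).mul
        ((hg.differentiable (by simp)) r).hasDerivAt)
    rw [h.deriv]; ring
  have hu2 : ∀ r : ℝ, deriv (deriv u) r = 2 * deriv g r + r * deriv (deriv g) r := by
    intro r
    rw [hu1]
    have h : HasDerivAt (fun r => g r + r * deriv g r)
        (deriv g r + (1 * deriv g r + r * deriv (deriv g) r)) r := by
      simpa [id_eq, Pi.add_def, Pi.mul_def] using (((hg.differentiable (by simp)) r).hasDerivAt.add
        ((hasDerivAt_id r).mul
          (((hg'.differentiable (by simp)) r).hasDerivAt)))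
    rw [h.deriv]; ring
  have hODE : ∀ r : ℝ, 0 < r → deriv (deriv u) r = c r * u r := by
    intro r hr
    have h1 := hf_eq (r • e0)
    rw [hlap r hr] at h1
    have h2 : f (r • e0) = g r := rfl
    rw [h2] at h1
    have : deriv (deriv g) r + 2 * (deriv g r / r) = c r * g r := by
      simp only [hcdef]; linarith
    rw [hu2]
    have hrne : r ≠ 0 := hr.ne'
    simp only [hudef]
    field_simp at this ⊢
    nlinarith [this]
  have hu0 : u 0 = 0 := by simp [hudef]
  have hgout : ∀ r : ℝ, R < r → g r = 1 - a₀ / r := by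
    intro r hr
    have hrpos : 0 < r := hR.trans hr
    have := hf_out (r • e0) (by rw [hnorm_smul r hrpos.le]; exact hr)
    rw [hnorm_smul r hrpos.le] at this
    exact this
  have huout : ∀ r : ℝ, R < r → u r = r - a₀ := by
    intro r hr
    have hrpos : 0 < r := hR.trans hr
    simp only [hudef]
    rw [hgout r hr]
    field_simp
  -- continuity and differentiability facts
  have hucont : Continuous u := hu.continuous
  have hudiff : Differentiable ℝ u := hu.differentiable (by simp)
  have hudiff' : Differentiable ℝ (deriv u) := by
    rw [hu1]
    exact (hg.differentiable (by simp)).add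
      (differentiable_id.mul (hg'.differentiable (by simp)))
  -- u is nonnegative on [0, ∞)
  have hunn : ∀ r : ℝ, 0 ≤ r → 0 ≤ u r := by
    by_contra hcon
    push_neg at hcon
    obtain ⟨r₀, hr₀0, hur₀⟩ := hcon
    have hr₀pos : 0 < r₀ := by
      rcases hr₀0.lt_or_eq with h | h
      · exact h
      · exfalso; rw [← h, hu0] at hur₀; exact lt_irrefl 0 hur₀
    set T : ℝ := R + 1 with hT
    have hTR : R < T := by simp [hT]
    have huT : 0 < u T := by
      rw [huout T hTR]; simp [hT]; linarith
    have hr₀T : r₀ < T := by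
      by_contra h
      push_neg at h
      have : R < r₀ := lt_of_lt_of_le hTR h
      rw [huout r₀ this] at hur₀
      linarith
    set A : Set ℝ := {r ∈ Set.Icc 0 r₀ | u r = 0} with hA
    have hAne : A.Nonempty := ⟨0, ⟨Set.left_mem_Icc.mpr hr₀0, hu0⟩⟩
    have hAbdd : BddAbove A := BddAbove.mono (fun x hx => hx.1) (bddAbove_Icc)
    have hAclosed : IsClosed A := by
      have : A = Set.Icc 0 r₀ ∩ u ⁻¹' {0} := by
        ext x; simp [hA, Set.mem_sep_iff]
      rw [this]
      exact isClosed_Icc.inter (isClosed_singleton.preimage hucont)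
    set α : ℝ := sSup A with hα
    have hαA : α ∈ A := hAclosed.csSup_mem hAne hAbdd
    have hα0 : 0 ≤ α := hαA.1.1
    have hαr₀ : α ≤ r₀ := hαA.1.2
    have huα : u α = 0 := hαA.2
    have hαlt : α < r₀ := by
      rcases hαr₀.lt_or_eq with h | h
      · exact h
      · exfalso; rw [h] at huα; rw [huα] at hur₀; exact lt_irrefl 0 hur₀
    set B : Set ℝ := {r ∈ Set.Icc r₀ T | u r = 0} with hB
    have hBne : B.Nonempty := by
      have h0mem : (0:ℝ) ∈ Set.Icc (u r₀) (u T) := ⟨hur₀.le, huT.le⟩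
      obtain ⟨x, hx, hux⟩ := intermediate_value_Icc hr₀T.le hucont.continuousOn h0mem
      exact ⟨x, hx, hux⟩
    have hBbdd : BddBelow B := BddBelow.mono (fun x hx => hx.1) (bddBelow_Icc)
    have hBclosed : IsClosed B := by
      have : B = Set.Icc r₀ T ∩ u ⁻¹' {0} := by
        ext x; simp [hB, Set.mem_sep_iff]
      rw [this]
      exact isClosed_Icc.inter (isClosed_singleton.preimage hucont)
    set β : ℝ := sInf B with hβ
    have hβB : β ∈ B := hBclosed.csInf_mem hBne hBbdd
    have hβr₀ : r₀ ≤ β := hβB.1.1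
    have hβT : β ≤ T := hβB.1.2
    have huβ : u β = 0 := hβB.2
    have hβgt : r₀ < β := by
      rcases hβr₀.lt_or_eq with h | h
      · exact h
      · exfalso; rw [← h] at huβ; rw [huβ] at hur₀; exact lt_irrefl 0 hur₀
    have hαβ : α < β := hαlt.trans hβgt
    -- u is negative on (α, β)
    have hneg : ∀ r ∈ Set.Ioo α β, u r < 0 := by
      intro r hr
      rcases lt_trichotomy (u r) 0 with h | h | h
      · exact h
      · exfalso
        rcases le_or_gt r r₀ with hrr | hrr
        · have : r ∈ A := ⟨⟨hα0.trans hr.1.le, hrr⟩, h⟩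
          exact absurd (le_csSup hAbdd this) (not_le.mpr hr.1)
        · have : r ∈ B := ⟨⟨hrr.le, hr.2.le.trans hβT⟩, h⟩
          exact absurd (csInf_le hBbdd this) (not_le.mpr hr.2)
      · exfalso
        rcases le_or_gt r r₀ with hrr | hrr
        · have hrlt : r < r₀ := by
            rcases hrr.lt_or_eq with h' | h'
            · exact h'
            · exfalso; rw [h'] at h; linarith
          have h0mem : (0:ℝ) ∈ Set.Icc (u r₀) (u r) := ⟨hur₀.le, h.le⟩
          obtain ⟨x, hx, hux⟩ := intermediate_value_Icc' hrlt.le hucont.continuousOn h0mem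
          have hxr₀ : x < r₀ := by
            rcases hx.2.lt_or_eq with h' | h'
            · exact h'
            · exfalso; rw [h'] at hux; rw [hux] at hur₀; exact lt_irrefl 0 hur₀
          have : x ∈ A := ⟨⟨hα0.trans (hr.1.trans_le hx.1).le, hxr₀.le⟩, hux⟩
          have := le_csSup hAbdd this
          have : α < x := hr.1.trans_le hx.1
          linarith [le_csSup hAbdd ⟨⟨hα0.trans (hr.1.trans_le hx.1).le, hxr₀.le⟩, hux⟩]
        · have h0mem : (0:ℝ) ∈ Set.Icc (u r₀) (u r) := ⟨hur₀.le, h.le⟩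
          obtain ⟨x, hx, hux⟩ := intermediate_value_Icc hrr.le hucont.continuousOn h0mem
          have : x ∈ B := ⟨⟨hx.1, (hx.2.trans hr.2.le).trans hβT⟩, hux⟩
          have := csInf_le hBbdd this
          linarith [hx.2, hr.2]
    -- u is concave on [α, β]
    have hconc : ConcaveOn ℝ (Set.Icc α β) u := by
      apply concaveOn_of_deriv2_nonpos (convex_Icc α β) hucont.continuousOn
        (hudiff.differentiableOn) (hudiff'.differentiableOn)
      intro x hx
      rw [interior_Icc] at hx
      have hxpos : 0 < x := lt_of_le_of_lt hα0 hx.1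
      have h2 : deriv^[2] u x = deriv (deriv u) x := by
        rw [Function.iterate_succ_apply', Function.iterate_one]
      rw [h2, hODE x hxpos]
      exact mul_nonpos_of_nonneg_of_nonpos (hc x) (hneg x hx).le
    -- contradiction via concavity
    have hlam : (0:ℝ) ≤ (β - r₀) / (β - α) := by
      apply div_nonneg <;> linarith
    have hmu : (0:ℝ) ≤ (r₀ - α) / (β - α) := by
      apply div_nonneg <;> linarith
    have hne : β - α ≠ 0 := by linarith
    have hsum : (β - r₀) / (β - α) + (r₀ - α) / (β - α) = 1 := by
      field_simp
      ring
    have hcomb := hconc.2 (Set.left_mem_Icc.mpr hαβ.le) (Set.right_mem_Icc.mpr hαβ.le)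
      hlam hmu hsum
    have hpt : ((β - r₀) / (β - α)) • α + ((r₀ - α) / (β - α)) • β = r₀ := by
      rw [smul_eq_mul, smul_eq_mul, div_mul_eq_mul_div, div_mul_eq_mul_div,
        ← add_div, div_eq_iff hne]
      ring
    rw [huα, huβ, hpt] at hcomb
    simp at hcomb
    linarith
  -- u is convex on [0, ∞)
  have hconv : ConvexOn ℝ (Set.Ici 0) u := by
    apply convexOn_of_deriv2_nonneg (convex_Ici 0) hucont.continuousOn
      (hudiff.differentiableOn) (hudiff'.differentiableOn)
    intro x hx
    rw [interior_Ici] at hx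
    have h2 : deriv^[2] u x = deriv (deriv u) x := by
      rw [Function.iterate_succ_apply', Function.iterate_one]
    rw [h2, hODE x hx]
    exact mul_nonneg (hc x) (hunn x hx.le)
  -- g is monotone on (0, ∞)
  have hslope : ∀ r : ℝ, 0 < r → slope u 0 r = g r := by
    intro r hr
    rw [slope_def_field, hu0, hudef]
    field_simp
    simp [hr.ne']
  have hmono : ∀ r s : ℝ, 0 < r → r ≤ s → g r ≤ g s := by
    intro r s hr hrs
    have hs : 0 < s := lt_of_lt_of_le hr hrs
    have h := hconv.slope_mono (Set.mem_Ici.mpr (le_refl (0:ℝ)))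
    have hmem : ∀ t : ℝ, 0 < t → t ∈ Set.Ici (0:ℝ) \ {0} := by
      intro t ht
      exact ⟨Set.mem_Ici.mpr ht.le, by simp [ht.ne']⟩
    have := h (hmem r hr) (hmem s hs) hrs
    rwa [hslope r hr, hslope s hs] at this
  have hgcont : Continuous g := hg.continuous
  have htend : Filter.Tendsto g (nhdsWithin 0 (Set.Ioi 0)) (nhds (g 0)) :=
    (hgcont.tendsto 0).mono_left nhdsWithin_le_nhds
  have hmono0 : ∀ s : ℝ, 0 < s → g 0 ≤ g s := by
    intro s hs
    refine le_of_tendsto htend ?_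
    filter_upwards [self_mem_nhdsWithin,
      Filter.mem_of_superset (nhdsWithin_le_nhds (gt_mem_nhds hs)) fun t ht => ht]
      with t ht1 ht2
    exact hmono t s ht1 ht2.le
  have hgmono : ∀ r s : ℝ, 0 ≤ r → r ≤ s → g r ≤ g s := by
    intro r s hr hrs
    rcases hr.lt_or_eq with h | h
    · exact hmono r s h hrs
    · rcases (h ▸ hrs).lt_or_eq with h' | h'
      · exact h ▸ hmono0 s (h ▸ h')
      · rw [← h, ← h']
  have hgnnpos : ∀ r : ℝ, 0 < r → 0 ≤ g r := by
    intro r hr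
    by_contra hcon
    push_neg at hcon
    have h1 := hunn r hr.le
    simp only [hudef] at h1
    nlinarith
  have hgnn : ∀ r : ℝ, 0 ≤ r → 0 ≤ g r := by
    intro r hr
    rcases hr.lt_or_eq with h | h
    · exact hgnnpos r h
    · rw [← h]
      refine ge_of_tendsto htend ?_
      filter_upwards [self_mem_nhdsWithin] with t ht
      exact hgnnpos t ht
  have hgle1 : ∀ r : ℝ, 0 ≤ r → g r ≤ 1 := by
    intro r hr
    have hs : R < R + 1 + r := by linarith
    have h1 : g r ≤ g (R + 1 + r) := hgmono r (R + 1 + r) hr (by linarith)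
    rw [hgout (R + 1 + r) hs] at h1
    have : 0 ≤ a₀ / (R + 1 + r) := div_nonneg ha₀.le (by linarith)
    linarith
  refine ⟨?_, ?_, ?_, ha₀.le⟩
  · intro x
    rw [hfx x]
    exact ⟨hgnn _ (norm_nonneg x), hgle1 _ (norm_nonneg x)⟩
  · intro x y hxy
    rw [hfx x, hfx y]
    exact hgmono _ _ (norm_nonneg x) hxy
  · intro v hv
    have hEq : ∀ᶠ r in atTop, r * (1 - f (r • v)) = a₀ := by
      filter_upwards [eventually_gt_atTop (max R 0)] with r hr
      have hrpos : 0 < r := lt_of_le_of_lt (le_max_right R 0) hr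
      have hnrm : ‖r • v‖ = r := by
        rw [norm_smul, hv, mul_one, Real.norm_eq_abs, abs_of_pos hrpos]
      have hfr : f (r • v) = 1 - a₀ / r := by
        rw [hf_out (r • v) (by rw [hnrm]; exact lt_of_le_of_lt (le_max_left R 0) hr), hnrm]
      rw [hfr]
      field_simp
      ring
    exact Filter.Tendsto.congr' (Filter.EventuallyEq.symm hEq) tendsto_const_nhds
end
end

section
/- Spectral gap of the Neumann two-body problem: the lowest eigenvalue e_ℓ of −Δ + ½V_a on the ball {|x| ≤ ℓ₁} with Neumann boundary conditions satisfies e_ℓ = 3a/ℓ₁³ (1 + o(1)) in the regime a ≪ ℓ₁, in the explicit model case where V_a is a hard-sphere-like potential replaced by the boundary condition: i.e., for the radial function 1−w with (−Δ)(1−w) = e(1−w) on {a ≤ |x| ≤ ℓ₁}, (1−w)(a) = 0, ∂_r(1−w)(ℓ₁) = 0, the eigenvalue e satisfies e·ℓ₁³/(3a) → 1 as a/ℓ₁ → 0. -/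
noncomputable section
open Set
open Real

lemma one_div_cos_sq (y : ℝ) (hy : Real.cos y ≠ 0) :
    1 / Real.cos y ^ 2 = Real.tan y ^ 2 + 1 := by
  rw [Real.tan_eq_sin_div_cos, div_pow, div_add' _ _ _ (pow_ne_zero 2 hy)]
  rw [div_eq_div_iff (pow_ne_zero 2 hy) (pow_ne_zero 2 hy)]
  nlinarith [Real.sin_sq_add_cos_sq y]

private lemma poly_deriv1 (y : ℝ) : HasDerivAt (fun y : ℝ => y + y ^ 3 / 3) (1 + y ^ 2) y := by
  have h3 := (hasDerivAt_pow 3 y).div_const 3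
  exact ((hasDerivAt_id y).add h3).congr_deriv (by push_cast; ring)

private lemma poly_deriv2 (c y : ℝ) :
    HasDerivAt (fun y : ℝ => y + y ^ 3 / c) (1 + 3 * y ^ 2 / c) y := by
  have h3 := (hasDerivAt_pow 3 y).div_const c
  exact ((hasDerivAt_id y).add h3).congr_deriv (by push_cast; ring)

lemma tan_lb {x : ℝ} (h0 : 0 < x) (h : x < π / 2) : x + x ^ 3 / 3 ≤ Real.tan x := by
  have key : MonotoneOn (fun y => Real.tan y - (y + y ^ 3 / 3)) (Icc 0 x) := by
    apply monotoneOn_of_hasDerivWithinAt_nonneg (f' := fun y => 1 / Real.cos y ^ 2 - (1 + y ^ 2))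
      (convex_Icc 0 x)
    · intro y hy
      have hcy : Real.cos y ≠ 0 :=
        (Real.cos_pos_of_mem_Ioo ⟨by nlinarith [Real.pi_pos, hy.1], by linarith [hy.2]⟩).ne'
      exact ((Real.continuousAt_tan.mpr hcy).continuousWithinAt).sub
        (Continuous.continuousWithinAt (by continuity))
    · intro y hy
      rw [interior_Icc] at hy
      have hcy : Real.cos y ≠ 0 :=
        (Real.cos_pos_of_mem_Ioo ⟨by nlinarith [Real.pi_pos, hy.1], by linarith [hy.2]⟩).ne'
      exact ((Real.hasDerivAt_tan hcy).sub (poly_deriv1 y)).hasDerivWithinAt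
    · intro y hy
      rw [interior_Icc] at hy
      have hcy : Real.cos y ≠ 0 :=
        (Real.cos_pos_of_mem_Ioo ⟨by nlinarith [Real.pi_pos, hy.1], by linarith [hy.2]⟩).ne'
      rw [one_div_cos_sq y hcy]
      have := Real.lt_tan hy.1 (lt_trans hy.2 h)
      nlinarith [hy.1]
  have h2 := key (left_mem_Icc.mpr h0.le) (right_mem_Icc.mpr h0.le) h0.le
  simp only [Real.tan_zero] at h2; norm_num at h2
  linarith

lemma tan_ub {x : ℝ} (h0 : 0 < x) (h : x < 1) :
    Real.tan x ≤ x + x ^ 3 / (3 * Real.cos x ^ 2) := by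
  have hpi : x < π / 2 := lt_trans h (by nlinarith [Real.pi_gt_three])
  have hcx : 0 < Real.cos x := Real.cos_pos_of_mem_Ioo ⟨by linarith [Real.pi_pos], hpi⟩
  have key : MonotoneOn (fun y => y + y ^ 3 / (3 * Real.cos x ^ 2) - Real.tan y) (Icc 0 x) := by
    apply monotoneOn_of_hasDerivWithinAt_nonneg
      (f' := fun y => 1 + 3 * y ^ 2 / (3 * Real.cos x ^ 2) - 1 / Real.cos y ^ 2) (convex_Icc 0 x)
    · intro y hy
      have hcy : Real.cos y ≠ 0 :=
        (Real.cos_pos_of_mem_Ioo ⟨by nlinarith [Real.pi_pos, hy.1], by linarith [hy.2]⟩).ne'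
      exact (ContinuousWithinAt.sub (Continuous.continuousWithinAt (by continuity))
        (Real.continuousAt_tan.mpr hcy).continuousWithinAt)
    · intro y hy
      rw [interior_Icc] at hy
      have hcy : Real.cos y ≠ 0 :=
        (Real.cos_pos_of_mem_Ioo ⟨by nlinarith [Real.pi_pos, hy.1], by linarith [hy.2]⟩).ne'
      exact ((poly_deriv2 (3 * Real.cos x ^ 2) y).sub (Real.hasDerivAt_tan hcy)).hasDerivWithinAt
    · intro y hy
      rw [interior_Icc] at hy
      have hcy : 0 < Real.cos y :=
        Real.cos_pos_of_mem_Ioo ⟨by nlinarith [Real.pi_pos, hy.1], by linarith [hy.2]⟩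
      rw [one_div_cos_sq y hcy.ne']
      have hsy : 0 ≤ Real.sin y :=
        Real.sin_nonneg_of_nonneg_of_le_pi hy.1.le (by nlinarith [Real.pi_gt_three, hy.2])
      have hcc : Real.cos x ≤ Real.cos y :=
        Real.cos_le_cos_of_nonneg_of_le_pi hy.1.le (by nlinarith [Real.pi_gt_three]) hy.2.le
      have htan : Real.tan y ≤ y / Real.cos x := by
        rw [Real.tan_eq_sin_div_cos, div_le_div_iff₀ hcy hcx]
        nlinarith [Real.sin_le hy.1.le]
      have htan0 : 0 ≤ Real.tan y := by
        rw [Real.tan_eq_sin_div_cos]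
        exact div_nonneg hsy hcy.le
      have hsq : Real.tan y ^ 2 ≤ y ^ 2 / Real.cos x ^ 2 := by
        rw [← div_pow]; nlinarith
      have : 3 * y ^ 2 / (3 * Real.cos x ^ 2) = y ^ 2 / Real.cos x ^ 2 := by ring
      rw [this]; linarith
  have h2 := key (left_mem_Icc.mpr h0.le) (right_mem_Icc.mpr h0.le) h0.le
  simp only [Real.tan_zero] at h2; norm_num at h2
  linarith


set_option maxHeartbeats 2000000 in
/-- Leading-order asymptotics of the lowest Neumann eigenvalue of the radial two-body
problem on the annulus `{a ≤ |x| ≤ ℓ₁}` in ℝ³ with a hard core at radius `a`: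
if `φ = 1 - w` is a radial ground state (positive eigenfunction) of `-Δ` with
`φ(a) = 0` and Neumann condition `φ'(ℓ₁) = 0`, of eigenvalue `e`, then
`e ℓ₁³ / (3a) → 1` as `a/ℓ₁ → 0`. -/
theorem neumann_lowest_eigenvalue_asymptotics :
    ∀ ε : ℝ, 0 < ε → ∃ δ : ℝ, 0 < δ ∧
      ∀ (a ℓ₁ e : ℝ) (φ : ℝ → ℝ),
        0 < a → a < ℓ₁ → a / ℓ₁ < δ →
        ContDiff ℝ 2 φ →
        (∀ r ∈ Icc a ℓ₁, -(deriv (deriv φ) r + (2 / r) * deriv φ r) = e * φ r) →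
        φ a = 0 →
        deriv φ ℓ₁ = 0 →
        (∀ r ∈ Ioc a ℓ₁, 0 < φ r) →
        |e * ℓ₁ ^ 3 / (3 * a) - 1| < ε := by
  intro ε hε
  refine ⟨min (ε / 4) (1 / 100), lt_min (by positivity) (by norm_num), ?_⟩
  intro a ℓ₁ e φ ha hal hδ hφ hODE hφa hNeu hφpos
  have hl : 0 < ℓ₁ := ha.trans hal
  set s : ℝ := a / ℓ₁ with hs_def
  have hs0 : 0 < s := div_pos ha hl
  have hs100 : s < 1 / 100 := hδ.trans_le (min_le_right _ _)
  have hsε : s < ε / 4 := hδ.trans_le (min_le_left _ _)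
  have hsa : a = s * ℓ₁ := by rw [hs_def, div_mul_cancel₀ a hl.ne']
  have h1s : (0:ℝ) < 1 - s := by
    have : s < 1 := by rw [hs_def, div_lt_one hl]; exact hal
    linarith
  -- smoothness facts
  have h2 : ContDiff ℝ (1 + 1) φ := by
    have h12 : ((1 : WithTop ℕ∞) + 1) = 2 := by norm_num
    rw [h12]; exact hφ
  have hφd : Differentiable ℝ φ := hφ.differentiable (by norm_num)
  have hφ'1 : ContDiff ℝ 1 (deriv φ) := (contDiff_succ_iff_deriv.mp h2).2.2
  have hφ'd : Differentiable ℝ (deriv φ) := hφ'1.differentiable (by norm_num)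
  -- u = r φ(r), v = u'
  set u : ℝ → ℝ := fun r => r * φ r with hu_def
  set v : ℝ → ℝ := fun r => φ r + r * deriv φ r with hv_def
  have hu' : ∀ r, HasDerivAt u (v r) r := by
    intro r
    have h : HasDerivAt (fun r => r * φ r) (1 * φ r + r * deriv φ r) r :=
      (hasDerivAt_id r).mul (hφd r).hasDerivAt
    show HasDerivAt (fun r => r * φ r) (φ r + r * deriv φ r) r
    convert h using 1; ring
  have hv' : ∀ r, HasDerivAt v (2 * deriv φ r + r * deriv (deriv φ) r) r := by
    intro r
    have h : HasDerivAt (fun r => φ r + r * deriv φ r)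
        (deriv φ r + (1 * deriv φ r + r * deriv (deriv φ) r)) r :=
      (hφd r).hasDerivAt.add ((hasDerivAt_id r).mul (hφ'd r).hasDerivAt)
    show HasDerivAt (fun r => φ r + r * deriv φ r) _ r
    convert h using 1; ring
  have hODE' : ∀ r ∈ Icc a ℓ₁, 2 * deriv φ r + r * deriv (deriv φ) r = -e * u r := by
    intro r hr
    have hr0 : r ≠ 0 := (lt_of_lt_of_le ha hr.1).ne'
    have h := hODE r hr
    have hd : deriv (deriv φ) r = -(e * φ r) - (2 / r) * deriv φ r := by linarith
    show 2 * deriv φ r + r * deriv (deriv φ) r = -e * (r * φ r)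
    rw [hd]
    field_simp
    ring
  have hupos : ∀ r ∈ Ioc a ℓ₁, 0 < u r := fun r hr =>
    mul_pos (ha.trans hr.1) (hφpos r hr)
  have hunn : ∀ r ∈ Icc a ℓ₁, 0 ≤ u r := by
    intro r hr
    rcases eq_or_lt_of_le hr.1 with h | h
    · show 0 ≤ r * φ r
      rw [← h, hφa, mul_zero]
    · exact (hupos r ⟨h, hr.2⟩).le
  have hφl : 0 < φ ℓ₁ := hφpos ℓ₁ ⟨hal, le_rfl⟩
  have hvl : v ℓ₁ = φ ℓ₁ := by
    show φ ℓ₁ + ℓ₁ * deriv φ ℓ₁ = φ ℓ₁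
    rw [hNeu]; ring
  have hvcont : Continuous v := hφd.continuous.add (continuous_id.mul hφ'1.continuous)
  have hucont : Continuous u := continuous_id.mul hφd.continuous
  -- e > 0
  have he : 0 < e := by
    by_contra hneg
    push_neg at hneg
    have hmono : MonotoneOn v (Icc a ℓ₁) := by
      apply monotoneOn_of_hasDerivWithinAt_nonneg
        (f' := fun r => 2 * deriv φ r + r * deriv (deriv φ) r) (convex_Icc a ℓ₁)
        hvcont.continuousOn
      · intro r hr
        exact (hv' r).hasDerivWithinAt
      · intro r hr
        rw [interior_Icc] at hr
        rw [hODE' r ⟨hr.1.le, hr.2.le⟩]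
        have := hunn r ⟨hr.1.le, hr.2.le⟩
        nlinarith
    obtain ⟨c, hc, hcv⟩ := exists_hasDerivAt_eq_slope u v hal
      hucont.continuousOn (fun x _ => hu' x)
    have h1 : v c ≤ v ℓ₁ := hmono ⟨hc.1.le, hc.2.le⟩ (right_mem_Icc.mpr hal.le) hc.2.le
    rw [hvl] at h1
    have hu_a : u a = 0 := by show a * φ a = 0; rw [hφa, mul_zero]
    have hu_l : u ℓ₁ = ℓ₁ * φ ℓ₁ := rfl
    rw [hcv, hu_a, hu_l, sub_zero, div_le_iff₀ (by linarith)] at h1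
    nlinarith
  set k : ℝ := Real.sqrt e with hk_def
  have hk : 0 < k := Real.sqrt_pos.mpr he
  have hk2 : k ^ 2 = e := Real.sq_sqrt he.le
  -- the Wronskian with sin(k(r-a))
  set W : ℝ → ℝ := fun r => u r * (k * Real.cos (k * (r - a))) - v r * Real.sin (k * (r - a))
    with hW_def
  have hin : ∀ r : ℝ, HasDerivAt (fun r => k * (r - a)) k r := by
    intro r
    simpa using ((hasDerivAt_id r).sub_const a).const_mul k
  have hsin' : ∀ r : ℝ, HasDerivAt (fun r => Real.sin (k * (r - a)))
      (k * Real.cos (k * (r - a))) r := by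
    intro r
    have := (hin r).sin
    convert this using 1; ring
  have hcos' : ∀ r : ℝ, HasDerivAt (fun r => k * Real.cos (k * (r - a)))
      (-(k ^ 2) * Real.sin (k * (r - a))) r := by
    intro r
    have := ((hin r).cos).const_mul k
    exact this.congr_deriv (by ring)
  have hW' : ∀ r ∈ Icc a ℓ₁, HasDerivAt W 0 r := by
    intro r hr
    have hD := ((hu' r).mul (hcos' r)).sub ((hv' r).mul (hsin' r))
    show HasDerivAt (fun r => u r * (k * Real.cos (k * (r - a))) - v r * Real.sin (k * (r - a))) 0 r
    refine hD.congr_deriv ?_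
    rw [hODE' r hr, hk2]
    ring
  have hWcont : Continuous W := by
    have hinner : Continuous (fun r : ℝ => k * (r - a)) :=
      continuous_const.mul (continuous_id.sub continuous_const)
    show Continuous (fun r => u r * (k * Real.cos (k * (r - a))) - v r * Real.sin (k * (r - a)))
    exact (hucont.mul (continuous_const.mul (Real.continuous_cos.comp hinner))).sub
      (hvcont.mul (Real.continuous_sin.comp hinner))
  have hWa : W a = 0 := by
    show u a * (k * Real.cos (k * (a - a))) - v a * Real.sin (k * (a - a)) = 0
    have : u a = 0 := by show a * φ a = 0; rw [hφa, mul_zero]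
    rw [this, sub_self, mul_zero, Real.sin_zero, zero_mul, mul_zero, zero_sub, neg_eq_zero]
  have hWconst : ∀ r ∈ Icc a ℓ₁, W r = 0 := by
    intro r hr
    have := constant_of_has_deriv_right_zero (f := W) (a := a) (b := ℓ₁)
      hWcont.continuousOn
      (fun x hx => (hW' x ⟨hx.1, hx.2.le⟩).hasDerivWithinAt) r hr
    rw [hWa] at this; exact this
  -- the branch bound k(ℓ₁ - a) < π
  set X : ℝ := k * (ℓ₁ - a) with hX_def
  have hX0 : 0 < X := mul_pos hk (by linarith)
  have hXpi : X < Real.pi := by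
    by_contra hge
    push_neg at hge
    set r₀ : ℝ := a + Real.pi / k with hr0_def
    have hr₀a : a < r₀ := by
      have := div_pos Real.pi_pos hk
      rw [hr0_def]; linarith
    have hr₀l : r₀ ≤ ℓ₁ := by
      have : Real.pi / k ≤ ℓ₁ - a := by
        rw [div_le_iff₀ hk, mul_comm]
        exact hge
      rw [hr0_def]; linarith
    have harg : k * (r₀ - a) = Real.pi := by
      rw [hr0_def]
      field_simp
      ring
    have hWr : u r₀ * (k * Real.cos (k * (r₀ - a))) - v r₀ * Real.sin (k * (r₀ - a)) = 0 :=
      hWconst r₀ ⟨hr₀a.le, hr₀l⟩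
    rw [harg, Real.cos_pi, Real.sin_pi] at hWr
    have hup := hupos r₀ ⟨hr₀a, hr₀l⟩
    nlinarith [mul_pos hup hk]
  -- the eigenvalue equation sin X = k ℓ₁ cos X
  have hWl : u ℓ₁ * (k * Real.cos (k * (ℓ₁ - a))) - v ℓ₁ * Real.sin (k * (ℓ₁ - a)) = 0 :=
    hWconst ℓ₁ (right_mem_Icc.mpr hal.le)
  have hul : u ℓ₁ = ℓ₁ * φ ℓ₁ := rfl
  rw [hul, hvl, ← hX_def] at hWl
  have hsc : Real.sin X = k * ℓ₁ * Real.cos X := by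
    have h := mul_left_cancel₀ hφl.ne'
      (show φ ℓ₁ * Real.sin X = φ ℓ₁ * (k * ℓ₁ * Real.cos X) by linarith [hWl]; )
    exact h
  have hsX : 0 < Real.sin X := Real.sin_pos_of_pos_of_lt_pi hX0 hXpi
  have hcX : 0 < Real.cos X := by
    rcases lt_or_ge 0 (Real.cos X) with h | h
    · exact h
    · exfalso
      nlinarith [mul_pos hk hl]
  have hXhalf : X < Real.pi / 2 := by
    by_contra hge2
    push_neg at hge2
    have := Real.cos_nonpos_of_pi_div_two_le_of_le hge2 (by linarith [Real.pi_pos])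
    linarith
  have htX : Real.tan X = k * ℓ₁ := by
    rw [Real.tan_eq_sin_div_cos, hsc]
    field_simp
  have hXs : X = (k * ℓ₁) * (1 - s) := by
    rw [hX_def, hsa]; ring
  have htan2 : Real.tan X = X / (1 - s) := by
    rw [eq_div_iff h1s.ne', htX]
    linarith [hXs]
  -- lower tangent bound : X^2 (1-s) ≤ 3 s
  have hlb := tan_lb hX0 hXhalf
  rw [htan2] at hlb
  have hlb' : (X + X ^ 3 / 3) * (1 - s) ≤ X := (le_div_iff₀ h1s).mp hlb
  have hX2le : X ^ 2 * (1 - s) ≤ 3 * s := by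
    nlinarith [hX0, mul_pos hX0 hX0]
  have hX1 : X < 1 := by nlinarith
  -- upper tangent bound : 3 s ≤ X^2 (1 + 2 s)
  have hub := tan_ub hX0 hX1
  rw [htan2] at hub
  have hcos2 : 1 - X ^ 2 ≤ Real.cos X ^ 2 := by
    nlinarith [Real.one_sub_sq_div_two_lt_cos (x := X) hX0.ne', hcX, sq_nonneg (X ^ 2)]
  have h1X2 : 0 < 1 - X ^ 2 := by nlinarith
  have hub1 : X * s / (1 - s) ≤ X ^ 3 / (3 * Real.cos X ^ 2) := by
    have hid : X / (1 - s) - X = X * s / (1 - s) := by field_simp; ring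
    linarith [hub, hid]
  have hub2 : X * s * (3 * Real.cos X ^ 2) ≤ X ^ 3 * (1 - s) := by
    rw [div_le_div_iff₀ h1s (by positivity)] at hub1
    linarith
  have hub3 : 3 * s * Real.cos X ^ 2 ≤ X ^ 2 * (1 - s) := by
    nlinarith [hX0, hub2]
  have hX2ge : 3 * s ≤ X ^ 2 * (1 + 2 * s) := by
    nlinarith [hcos2, hX2le, hs0]
  -- rewrite the goal quantity
  have hT : e * ℓ₁ ^ 3 / (3 * a) = X ^ 2 / (3 * s * (1 - s) ^ 2) := by
    have hXsq : X ^ 2 = e * ℓ₁ ^ 2 * (1 - s) ^ 2 := by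
      rw [hX_def, ← hk2, hsa]; ring
    rw [hXsq, hsa]
    field_simp
  rw [hT, abs_lt]
  have hD : 0 < 3 * s * (1 - s) ^ 2 := by positivity
  have h3s : (0:ℝ) < 3 * s := by linarith
  constructor
  · rw [neg_lt, neg_sub]
    rcases le_or_gt 1 ε with hbig | hsmall
    · have hpos : 0 < X ^ 2 / (3 * s * (1 - s) ^ 2) := by positivity
      linarith
    · have hP : 0 ≤ (3 * s ^ 2 - 2 * s ^ 3) * (1 - ε) :=
        mul_nonneg (by nlinarith only [mul_pos hs0 hs0, hs100]) (by linarith)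
      have B : (1 - ε) * ((1 - s) ^ 2 * (1 + 2 * s)) < 1 := by nlinarith only [hP, hε]
      have key1' : (1 - ε) * (3 * s * (1 - s) ^ 2) * (1 + 2 * s) < X ^ 2 * (1 + 2 * s) := by
        calc (1 - ε) * (3 * s * (1 - s) ^ 2) * (1 + 2 * s)
            = (3 * s) * ((1 - ε) * ((1 - s) ^ 2 * (1 + 2 * s))) := by ring
          _ < (3 * s) * 1 := mul_lt_mul_of_pos_left B h3s
          _ = 3 * s := by ring
          _ ≤ X ^ 2 * (1 + 2 * s) := hX2ge
      have key1 : (1 - ε) * (3 * s * (1 - s) ^ 2) < X ^ 2 :=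
        lt_of_mul_lt_mul_right key1' (by linarith)
      have : 1 - ε < X ^ 2 / (3 * s * (1 - s) ^ 2) := (lt_div_iff₀ hD).mpr key1
      linarith
  · have hse : s * ε < (1 / 100) * ε := mul_lt_mul_of_pos_right hs100 hε
    have hC3 : 0 ≤ (3 * s ^ 2 - s ^ 3) * (1 + ε) :=
      mul_nonneg (by nlinarith only [mul_pos hs0 hs0, hs100]) (by linarith)
    have C : 1 < (1 + ε) * (1 - s) ^ 3 := by nlinarith only [hse, hC3, hsε, hε, hs0, hs100]
    have key2' : X ^ 2 * (1 - s) < ((1 + ε) * (3 * s * (1 - s) ^ 2)) * (1 - s) := by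
      calc X ^ 2 * (1 - s) ≤ 3 * s := hX2le
        _ = (3 * s) * 1 := by ring
        _ < (3 * s) * ((1 + ε) * (1 - s) ^ 3) := mul_lt_mul_of_pos_left C h3s
        _ = ((1 + ε) * (3 * s * (1 - s) ^ 2)) * (1 - s) := by ring
    have key2 : X ^ 2 < (1 + ε) * (3 * s * (1 - s) ^ 2) :=
      lt_of_mul_lt_mul_right key2' (by linarith)
    have : X ^ 2 / (3 * s * (1 - s) ^ 2) < 1 + ε := (div_lt_iff₀ hD).mpr (by linarith [key2])
    linarith
end
end
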